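/- arXiv:0707.3056 — 2 statements merged into one kernel-verified Lean document; each statement's English description precedes it below -/
import Mathlib

section
/- If 0 < t₁ ≤ t₂ ≤ 4/3 and 0 < t₃ ≤ 4/3 with all V_i > 0 and H_i > 0, then E₁ := t₂²t₃² + H₁V₁ − L₁²/4 > 0. Consequently, E_i < 0 can hold only when t_i > max(t_j, t_k), and at most one of E₁, E₂, E₃ can be negative. -/
/-!
Clearing the denominator `t₁` of `V₁` turns `t₁ E₁` into a quadratic in `t₃` whose leading
coefficient is positive and whose constant term is nonnegative when `0 < t₁ ≤ t₂ ≤ 4/3`.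
If the linear coefficient is nonnegative the quadratic is positive for `t₃ > 0`; otherwise its
discriminant is `-4 t₁ (t₂ - t₁) R(t₁, t₂)` with `R > 0`. Since `E_i` is symmetric in `t_j, t_k`,
a negative `E_i` forces `t_i` above both other variables, which two indices cannot do at once.
-/

/-- V_i = (t_j² + t_k² − 3t_i² + 2t_i t_j + 2t_i t_k − 2t_j t_k)/t_i -/
noncomputable def Vq (ti tj tk : ℝ) : ℝ :=
  (tj^2 + tk^2 - 3*ti^2 + 2*ti*tj + 2*ti*tk - 2*tj*tk) / ti

/-- H_i = 4 − 3t_i -/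
def Hq (ti : ℝ) : ℝ := 4 - 3*ti

/-- L_i = 6(t_j t_k − t_j − t_k + t_i) -/
def Lq (ti tj tk : ℝ) : ℝ := 6*(tj*tk - tj - tk + ti)

/-- E_i = t_j²t_k² + H_i V_i − L_i²/4 -/
noncomputable def Eq' (ti tj tk : ℝ) : ℝ :=
  tj^2*tk^2 + Hq ti * Vq ti tj tk - (Lq ti tj tk)^2 / 4

theorem quadratic_pos_of_discrim_neg {K : Type*} [Field K] [LinearOrder K] [IsStrictOrderedRing K]
    {a b c : K} (ha : 0 < a) (h : discrim a b c < 0) (x : K) :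
    0 < a * (x * x) + b * x + c := by
  have hsq : 4 * a * (a * (x * x) + b * x + c) = (2 * a * x + b) ^ 2 - discrim a b c := by
    rw [discrim]; ring
  have : 0 < 4 * a * (a * (x * x) + b * x + c) := by
    rw [hsq]; nlinarith [sq_nonneg (2 * a * x + b)]
  exact pos_of_mul_pos_right this (by positivity)

theorem Eq'_comm (ti tj tk : ℝ) : Eq' ti tj tk = Eq' ti tk tj := by
  unfold Eq' Vq Hq Lq; ring_nf

theorem mul_Eq'_eq_quadratic {a : ℝ} (ha : a ≠ 0) (b c : ℝ) :
    a * Eq' a b c = (a*b^2 + 4 - 3*a - 9*a*(b-1)^2) * (c * c)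
      + 2*(b-a)*(9*a*b-6*a-4) * c + 4*(b-a)*(b+3*a-3*a*b) := by
  unfold Eq' Vq Hq Lq
  field_simp
  ring

section
variable {a b : ℝ} (ha : 0 < a) (hab : a ≤ b) (hb : b ≤ 4/3)
include ha hab hb

theorem Eq'_leadingCoeff_pos : 0 < a*b^2 + 4 - 3*a - 9*a*(b-1)^2 := by
  nlinarith [mul_nonneg ha.le (sub_nonneg.2 hb), sq_nonneg (b-1),
    mul_nonneg ha.le (sq_nonneg (b-1))]

theorem Eq'_constCoeff_nonneg : 0 ≤ 4*(b-a)*(b+3*a-3*a*b) := by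
  have : 0 ≤ b+3*a-3*a*b := by nlinarith [mul_nonneg ha.le (sub_nonneg.2 hb)]
  nlinarith [sub_nonneg.2 hab]

theorem Eq'_discrimFactor_pos (hB : 9*a*b - 6*a - 4 ≤ 0) :
    0 < 64-144*b+144*b^2-32*b^3 + a*(-96+252*b-204*b^2+15*b^3) + a^2*(36-108*b+81*b^2) := by
  have hB' : 0 ≤ 6*a + 4 - 9*a*b := by linarith
  nlinarith [mul_nonneg hB' ha.le, mul_nonneg hB' (sub_nonneg.2 hab),
    mul_nonneg hB' (sub_nonneg.2 hb), mul_nonneg hB' hB', sq_nonneg (b-a), sq_nonneg (3*b-2),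
    mul_pos ha (ha.trans_le hab), mul_nonneg (mul_nonneg hB' ha.le) (sub_nonneg.2 hb),
    mul_nonneg (mul_nonneg ha.le ha.le) (sub_nonneg.2 hb)]

theorem Eq'_pos {c : ℝ} (hc : 0 < c) : 0 < Eq' a b c := by
  refine pos_of_mul_pos_right (a := a) ?_ ha.le
  rw [mul_Eq'_eq_quadratic ha.ne']
  have hA := Eq'_leadingCoeff_pos ha hab hb
  have hC := Eq'_constCoeff_nonneg ha hab hb
  rcases le_or_gt 0 (9*a*b-6*a-4) with hB | hB
  · have : 0 ≤ 2*(b-a)*(9*a*b-6*a-4) := by nlinarith [mul_nonneg (sub_nonneg.2 hab) hB]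
    nlinarith [mul_pos hA (mul_pos hc hc), mul_nonneg this hc.le]
  rcases hab.eq_or_lt with rfl | hlt
  · nlinarith [mul_pos hA (mul_pos hc hc)]
  refine quadratic_pos_of_discrim_neg hA ?_ c
  have hdisc : discrim (a*b^2 + 4 - 3*a - 9*a*(b-1)^2) (2*(b-a)*(9*a*b-6*a-4))
      (4*(b-a)*(b+3*a-3*a*b)) = -(4*a*(b-a)) *
        (64-144*b+144*b^2-32*b^3 + a*(-96+252*b-204*b^2+15*b^3) + a^2*(36-108*b+81*b^2)) := by
    rw [discrim]; ring
  rw [hdisc, neg_mul]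
  exact neg_neg_of_pos (mul_pos (by nlinarith) (Eq'_discrimFactor_pos ha hab hb hB.le))

end

theorem max_lt_of_Eq'_neg {a b c : ℝ} (ha : 0 < a) (hb : 0 < b) (hc : 0 < c)
    (hb' : b ≤ 4/3) (hc' : c ≤ 4/3) (hE : Eq' a b c < 0) : max b c < a := by
  refine max_lt (lt_of_not_ge fun hab => ?_) (lt_of_not_ge fun hac => ?_)
  · exact hE.not_gt (Eq'_pos ha hab hb' hc)
  · exact hE.not_gt (Eq'_comm a b c ▸ Eq'_pos ha hac hc' hb)

theorem stmt_10 :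
    (∀ t₁ t₂ t₃ : ℝ, 0 < t₁ → t₁ ≤ t₂ → t₂ ≤ 4/3 → 0 < t₃ → t₃ ≤ 4/3 →
      Vq t₁ t₂ t₃ > 0 → Vq t₂ t₃ t₁ > 0 → Vq t₃ t₁ t₂ > 0 →
      Hq t₁ > 0 → Hq t₂ > 0 → Hq t₃ > 0 →
      Eq' t₁ t₂ t₃ > 0) ∧
    (∀ t₁ t₂ t₃ : ℝ, 0 < t₁ → 0 < t₂ → 0 < t₃ →
      t₁ ≤ 4/3 → t₂ ≤ 4/3 → t₃ ≤ 4/3 →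
      Vq t₁ t₂ t₃ > 0 → Vq t₂ t₃ t₁ > 0 → Vq t₃ t₁ t₂ > 0 →
      Hq t₁ > 0 → Hq t₂ > 0 → Hq t₃ > 0 →
      ((Eq' t₁ t₂ t₃ < 0 → t₁ > max t₂ t₃) ∧
       (Eq' t₂ t₃ t₁ < 0 → t₂ > max t₃ t₁) ∧
       (Eq' t₃ t₁ t₂ < 0 → t₃ > max t₁ t₂) ∧
       ¬(Eq' t₁ t₂ t₃ < 0 ∧ Eq' t₂ t₃ t₁ < 0) ∧
       ¬(Eq' t₁ t₂ t₃ < 0 ∧ Eq' t₃ t₁ t₂ < 0) ∧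
       ¬(Eq' t₂ t₃ t₁ < 0 ∧ Eq' t₃ t₁ t₂ < 0))) := by
  refine ⟨fun t₁ t₂ t₃ h1 h12 h2 h3 _ _ _ _ _ _ _ => Eq'_pos h1 h12 h2 h3, ?_⟩
  intro t₁ t₂ t₃ h1 h2 h3 hb1 hb2 hb3 _ _ _ _ _ _
  have max1 := max_lt_of_Eq'_neg h1 h2 h3 hb2 hb3
  have max2 := max_lt_of_Eq'_neg h2 h3 h1 hb3 hb1
  have max3 := max_lt_of_Eq'_neg h3 h1 h2 hb1 hb2
  refine ⟨max1, max2, max3, ?_, ?_, ?_⟩ <;> rintro ⟨hi, hj⟩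
  · exact (max_lt_iff.1 (max1 hi)).1.not_gt (max_lt_iff.1 (max2 hj)).2
  · exact (max_lt_iff.1 (max1 hi)).2.not_gt (max_lt_iff.1 (max3 hj)).1
  · exact (max_lt_iff.1 (max2 hi)).1.not_gt (max_lt_iff.1 (max3 hj)).2
end

section
/- The region {(t₁,t₂,t₃) ∈ ℝ³ : t_i > 0, V_i > 0, H_i > 0 for all i} is star-shaped with respect to the point (1,1,1): if (t₁,t₂,t₃) satisfies all the inequalities, then so does (1−s)(1,1,1) + s(t₁,t₂,t₃) for all s ∈ [0,1]. -/
/-- The region of metrics with positive vertical and horizontal curvatures. -/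
def posCone (t₁ t₂ t₃ : ℝ) : Prop :=
  0 < t₁ ∧ 0 < t₂ ∧ 0 < t₃ ∧
  Vq t₁ t₂ t₃ > 0 ∧ Vq t₂ t₃ t₁ > 0 ∧ Vq t₃ t₁ t₂ > 0 ∧
  Hq t₁ > 0 ∧ Hq t₂ > 0 ∧ Hq t₃ > 0

lemma combo_pos (t s : ℝ) (ht : 0 < t) (hs : 0 ≤ s) (hs1 : s ≤ 1) :
    0 < (1 - s)*1 + s*t := by
  rcases hs.lt_or_eq with hs' | rfl
  · nlinarith [mul_pos hs' ht]
  · norm_num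

lemma Hq_seg (t s : ℝ) (hH : Hq t > 0) (hs : 0 ≤ s) (hs1 : s ≤ 1) :
    Hq ((1 - s)*1 + s*t) > 0 := by
  unfold Hq at *
  rcases hs.lt_or_eq with hs' | rfl
  · nlinarith [mul_pos hs' hH]
  · norm_num

lemma Vq_seg (t₁ t₂ t₃ s : ℝ) (h1 : 0 < t₁) (h2 : 0 < t₂) (h3 : 0 < t₃)
    (hV : Vq t₁ t₂ t₃ > 0) (hs : 0 ≤ s) (hs1 : s ≤ 1) :
    Vq ((1 - s)*1 + s*t₁) ((1 - s)*1 + s*t₂) ((1 - s)*1 + s*t₃) > 0 := by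
  have hu1 := combo_pos t₁ s h1 hs hs1
  have hN : 0 < t₂^2 + t₃^2 - 3*t₁^2 + 2*t₁*t₂ + 2*t₁*t₃ - 2*t₂*t₃ := by
    have := mul_pos hV h1
    rw [Vq, div_mul_cancel₀ _ h1.ne'] at this
    linarith
  have h123 : 0 < t₂ + t₃ - t₁ := by
    nlinarith [mul_pos h2 h3]
  rw [Vq, gt_iff_lt]
  apply div_pos _ hu1
  rcases hs.lt_or_eq with hs' | rfl
  · nlinarith [mul_pos (mul_pos hs' hs') hN,
      mul_nonneg (mul_nonneg (by linarith : (0:ℝ) ≤ 1 - s) hs) h123.le,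
      sq_nonneg (1 - s)]
  · norm_num

theorem stmt_19 (t₁ t₂ t₃ : ℝ) (h : posCone t₁ t₂ t₃) :
    ∀ s ∈ Set.Icc (0:ℝ) 1,
      posCone ((1 - s)*1 + s*t₁) ((1 - s)*1 + s*t₂) ((1 - s)*1 + s*t₃) := by
  obtain ⟨h1, h2, h3, hV1, hV2, hV3, hH1, hH2, hH3⟩ := h
  rintro s ⟨hs0, hs1⟩
  exact ⟨combo_pos t₁ s h1 hs0 hs1, combo_pos t₂ s h2 hs0 hs1, combo_pos t₃ s h3 hs0 hs1,
    Vq_seg t₁ t₂ t₃ s h1 h2 h3 hV1 hs0 hs1,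
    Vq_seg t₂ t₃ t₁ s h2 h3 h1 hV2 hs0 hs1,
    Vq_seg t₃ t₁ t₂ s h3 h1 h2 hV3 hs0 hs1,
    Hq_seg t₁ s hH1 hs0 hs1, Hq_seg t₂ s hH2 hs0 hs1, Hq_seg t₃ s hH3 hs0 hs1⟩
end
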